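/- Let f : V → [0,∞] with f not identically ∞, let A : V → W be a bounded linear operator between real separable Hilbert spaces, let d ∈ W, and define J_γ(x) = Q_γ(f)(x) + (1/2)‖Ax − d‖². If γ > 0 and there exists ε > 0 with ‖Ax‖² ≥ (γ + ε)‖x‖² for all x ∈ V (i.e. A*A ≻ γI), then J_γ is strongly convex and has a unique global minimizer. -/

import Mathlib

variable {V : Type*} [NormedAddCommGroup V] [InnerProductSpace ℝ V] [CompleteSpace V]
  [TopologicalSpace.SeparableSpace V]

/-- The quadratic envelope `Q_γ(f)`:
`Q_γ(f)(x) = sup { α − (γ/2)‖x−y‖² : α ∈ ℝ, y ∈ V, α − (γ/2)‖·−y‖² ≤ f }`. -/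
noncomputable def Qenv (γ : ℝ) (f : V → EReal) (x : V) : EReal :=
  sSup {v : EReal | ∃ α : ℝ, ∃ y : V,
    (∀ z : V, ((α - γ / 2 * ‖z - y‖ ^ 2 : ℝ) : EReal) ≤ f z) ∧
      v = ((α - γ / 2 * ‖x - y‖ ^ 2 : ℝ) : EReal)}

/-- The transform `S_γ(f)(y) = sup_x ( −f(x) − (γ/2)‖x−y‖² )`. -/
noncomputable def Senv (γ : ℝ) (f : V → EReal) (y : V) : EReal :=
  ⨆ x : V, (-(f x) - ((γ / 2 * ‖x - y‖ ^ 2 : ℝ) : EReal))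

/-- Convexity for extended-real-valued functions. -/
def ERealConvex (g : V → EReal) : Prop :=
  ∀ x y : V, ∀ a b : ℝ, 0 ≤ a → 0 ≤ b → a + b = 1 →
    g (a • x + b • y) ≤ (a : EReal) * g x + (b : EReal) * g y

/-- The lower semicontinuous convex envelope: the (pointwise) greatest lower semicontinuous
convex minorant of `g`. -/
noncomputable def convEnv (g : V → EReal) (x : V) : EReal :=
  ⨆ h : {h : V → EReal // LowerSemicontinuous h ∧ ERealConvex h ∧ ∀ z, h z ≤ g z}, h.1 x

/-- Lower semicontinuity with respect to the weak topology of `V`. -/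
def WeaklyLSC (g : V → EReal) : Prop :=
  LowerSemicontinuous (fun x : WeakSpace ℝ V => g x)

/-- `h` is coercive iff all its sublevel sets are bounded. -/
def Coercive (h : V → EReal) : Prop :=
  ∀ c : ℝ, Bornology.IsBounded {x : V | h x ≤ (c : EReal)}


/-- `J(x) = f(x) + (1/2)‖Ax − d‖²`. -/
noncomputable def Jfun {W : Type*} [NormedAddCommGroup W] [InnerProductSpace ℝ W]
    (f : V → EReal) (A : V →L[ℝ] W) (d : W) (x : V) : EReal :=
  f x + ((1 / 2 * ‖A x - d‖ ^ 2 : ℝ) : EReal)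

/-- `J_γ(x) = Q_γ(f)(x) + (1/2)‖Ax − d‖²`. -/
noncomputable def Jgamma {W : Type*} [NormedAddCommGroup W] [InnerProductSpace ℝ W]
    (γ : ℝ) (f : V → EReal) (A : V →L[ℝ] W) (d : W) (x : V) : EReal :=
  Qenv γ f x + ((1 / 2 * ‖A x - d‖ ^ 2 : ℝ) : EReal)

set_option linter.unusedSectionVars false
set_option linter.unusedVariables false
set_option maxHeartbeats 1000000

open RealInnerProductSpace in
private lemma quad_identity' {V₁ W₁ : Type*} [NormedAddCommGroup V₁] [InnerProductSpace ℝ V₁]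
    [NormedAddCommGroup W₁] [InnerProductSpace ℝ W₁]
    (A : V₁ →L[ℝ] W₁) (d : W₁) (γ α : ℝ) (y₀ x y : V₁) (a b : ℝ) (hab : a + b = 1) :
    a * (α - γ/2*‖x - y₀‖^2 + 1/2*‖A x - d‖^2) + b * (α - γ/2*‖y - y₀‖^2 + 1/2*‖A y - d‖^2)
      - (α - γ/2*‖a•x + b•y - y₀‖^2 + 1/2*‖A (a•x + b•y) - d‖^2)
    = a*b/2 * (‖A (x - y)‖^2 - γ*‖x - y‖^2) := by
  have hA1 : A (a•x + b•y) = a • A x + b • A y := by simp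
  have hA2 : A (x - y) = A x - A y := by simp
  rw [hA1, hA2]
  simp only [norm_sub_sq_real, norm_add_sq_real, inner_add_left, inner_smul_left,
    inner_smul_right, norm_smul, RCLike.inner_apply, conj_trivial, mul_pow, sq_abs,
    Real.norm_eq_abs]
  have hb : b = 1 - a := by linarith
  subst hb
  ring

open RealInnerProductSpace in
private lemma sq_identity {V₁ : Type*} [NormedAddCommGroup V₁] [InnerProductSpace ℝ V₁]
    (ε : ℝ) (x y : V₁) (a b : ℝ) (hab : a + b = 1) :
    a * (ε/2*‖x‖^2) + b * (ε/2*‖y‖^2) - ε/2*‖a•x + b•y‖^2 = a*b*(ε/2)*‖x - y‖^2 := by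
  simp only [norm_sub_sq_real, norm_add_sq_real, inner_add_left, inner_smul_left,
    inner_smul_right, norm_smul, RCLike.inner_apply, conj_trivial, mul_pow, sq_abs,
    Real.norm_eq_abs]
  have hb : b = 1 - a := by linarith
  subst hb
  ring

private lemma ereal_mul_add_coe (a : ℝ) (ha : 0 ≤ a) (u : EReal) (hu : u ≠ ⊥) (t : ℝ) :
    (a : EReal) * (u + (t : ℝ)) = (a : EReal) * u + ((a * t : ℝ) : EReal) := by
  induction u with
  | bot => exact absurd rfl hu
  | coe u => norm_cast; ring
  | top =>
      rcases eq_or_lt_of_le ha with h | h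
      · rw [← h]; norm_cast; simp
      · rw [EReal.top_add_coe, EReal.coe_mul_top_of_pos h, EReal.top_add_coe]


private lemma le_Qenv (γ : ℝ) (f : V → EReal) (α : ℝ) (y₀ : V)
    (hadm : ∀ z : V, ((α - γ / 2 * ‖z - y₀‖ ^ 2 : ℝ) : EReal) ≤ f z) (x : V) :
    ((α - γ / 2 * ‖x - y₀‖ ^ 2 : ℝ) : EReal) ≤ Qenv γ f x := by
  apply le_sSup
  exact ⟨α, y₀, hadm, rfl⟩

private lemma Qenv_nonneg (γ : ℝ) (hγ : 0 ≤ γ) (f : V → EReal) (hf0 : ∀ x, 0 ≤ f x) (x : V) :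
    0 ≤ Qenv γ f x := by
  have hadm : ∀ z : V, (((0:ℝ) - γ / 2 * ‖z - x‖ ^ 2 : ℝ) : EReal) ≤ f z := by
    intro z
    refine le_trans ?_ (hf0 z)
    have h : ((0:ℝ) - γ / 2 * ‖z - x‖ ^ 2 : ℝ) ≤ 0 := by nlinarith [sq_nonneg ‖z - x‖]
    exact_mod_cast h
  have h := le_Qenv γ f 0 x hadm x
  simpa using h

private lemma Qenv_le (γ : ℝ) (f : V → EReal) (x : V) : Qenv γ f x ≤ f x := by
  refine sSup_le ?_
  rintro v ⟨α, y₀, hadm, rfl⟩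
  exact hadm x

private lemma Jgamma_nonneg {W : Type*} [NormedAddCommGroup W] [InnerProductSpace ℝ W]
    (γ : ℝ) (hγ : 0 < γ) (f : V → EReal) (hf0 : ∀ x, 0 ≤ f x) (A : V →L[ℝ] W) (d : W) (x : V) :
    0 ≤ Jgamma γ f A d x := by
  have h1 : 0 ≤ Qenv γ f x := Qenv_nonneg γ hγ.le f hf0 x
  have h2 : (0 : EReal) ≤ ((1 / 2 * ‖A x - d‖ ^ 2 : ℝ) : EReal) := by
    norm_cast; positivity
  calc (0 : EReal) = 0 + 0 := by simp
  _ ≤ _ := add_le_add h1 h2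

private lemma key_ineq {W : Type*} [NormedAddCommGroup W] [InnerProductSpace ℝ W]
    (f : V → EReal) (hf0 : ∀ x, 0 ≤ f x)
    (A : V →L[ℝ] W) (d : W) (γ ε : ℝ) (hγ : 0 < γ) (hε : 0 < ε)
    (hA : ∀ x : V, (γ + ε) * ‖x‖ ^ 2 ≤ ‖A x‖ ^ 2)
    (x y : V) (a b : ℝ) (ha : 0 ≤ a) (hb : 0 ≤ b) (hab : a + b = 1) :
    Jgamma γ f A d (a • x + b • y) + ((a * b * (ε/2) * ‖x - y‖^2 : ℝ) : EReal)
      ≤ (a : EReal) * Jgamma γ f A d x + (b : EReal) * Jgamma γ f A d y := by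
  set w := a • x + b • y with hw
  set T := (a : EReal) * Jgamma γ f A d x + (b : EReal) * Jgamma γ f A d y with hT
  have key : ∀ α : ℝ, ∀ y₀ : V,
      (∀ z : V, ((α - γ / 2 * ‖z - y₀‖ ^ 2 : ℝ) : EReal) ≤ f z) →
      (((α - γ / 2 * ‖w - y₀‖ ^ 2) + (1 / 2 * ‖A w - d‖ ^ 2 + a * b * (ε/2) * ‖x - y‖^2) : ℝ) : EReal)
        ≤ T := by
    intro α y₀ hadm
    have hqid := quad_identity' A d γ α y₀ x y a b hab
    have hq : ε * ‖x - y‖^2 ≤ ‖A (x - y)‖^2 - γ * ‖x - y‖^2 := by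
      have := hA (x - y); nlinarith [sq_nonneg ‖x - y‖]
    have hab' : 0 ≤ a * b := mul_nonneg ha hb
    have hreal : (α - γ / 2 * ‖w - y₀‖ ^ 2) + (1 / 2 * ‖A w - d‖ ^ 2 + a * b * (ε/2) * ‖x - y‖^2)
        ≤ a * (α - γ/2*‖x - y₀‖^2 + 1/2*‖A x - d‖^2)
          + b * (α - γ/2*‖y - y₀‖^2 + 1/2*‖A y - d‖^2) := by
      nlinarith [mul_le_mul_of_nonneg_left hq hab']
    refine le_trans (EReal.coe_le_coe_iff.mpr hreal) ?_
    rw [EReal.coe_add, EReal.coe_mul, EReal.coe_mul]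
    have hx' : ((α - γ/2*‖x - y₀‖^2 + 1/2*‖A x - d‖^2 : ℝ) : EReal) ≤ Jgamma γ f A d x := by
      rw [EReal.coe_add]
      exact add_le_add_left (le_Qenv γ f α y₀ hadm x) _
    have hy' : ((α - γ/2*‖y - y₀‖^2 + 1/2*‖A y - d‖^2 : ℝ) : EReal) ≤ Jgamma γ f A d y := by
      rw [EReal.coe_add]
      exact add_le_add_left (le_Qenv γ f α y₀ hadm y) _
    exact add_le_add (mul_le_mul_of_nonneg_left hx' (by exact_mod_cast ha))
      (mul_le_mul_of_nonneg_left hy' (by exact_mod_cast hb))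
  -- now assemble
  show Qenv γ f w + _ + _ ≤ T
  rw [add_assoc, ← EReal.coe_add]
  set k : ℝ := 1 / 2 * ‖A w - d‖ ^ 2 + a * b * (ε/2) * ‖x - y‖^2 with hk
  rw [← EReal.le_sub_iff_add_le (Or.inl (EReal.coe_ne_bot k)) (Or.inl (EReal.coe_ne_top k))]
  refine sSup_le ?_
  rintro v ⟨α, y₀, hadm, rfl⟩
  rw [EReal.le_sub_iff_add_le (Or.inl (EReal.coe_ne_bot k)) (Or.inl (EReal.coe_ne_top k)),
    ← EReal.coe_add]
  exact key α y₀ hadm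

private lemma strong_convex {W : Type*} [NormedAddCommGroup W] [InnerProductSpace ℝ W]
    (f : V → EReal) (hf0 : ∀ x, 0 ≤ f x)
    (A : V →L[ℝ] W) (d : W) (γ ε : ℝ) (hγ : 0 < γ) (hε : 0 < ε)
    (hA : ∀ x : V, (γ + ε) * ‖x‖ ^ 2 ≤ ‖A x‖ ^ 2) :
    ERealConvex (fun x : V => Jgamma γ f A d x - ((ε / 2 * ‖x‖ ^ 2 : ℝ) : EReal)) := by
  intro x y a b ha hb hab
  have hJbot : ∀ z : V, Jgamma γ f A d z ≠ ⊥ := fun z =>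
    ((lt_of_lt_of_le (by simp) (Jgamma_nonneg γ hγ f hf0 A d z)) : (⊥:EReal) < _).ne'
  set J := Jgamma γ f A d with hJ
  set w := a • x + b • y with hw
  have key := key_ineq f hf0 A d γ ε hγ hε hA x y a b ha hb hab
  rw [← hw, ← hJ] at key
  have hsq := sq_identity ε x y a b hab
  rw [← hw] at hsq
  have e2 : (-(ε / 2 * ‖w‖ ^ 2) : ℝ)
      = a * b * (ε/2) * ‖x - y‖^2 + (a * -(ε / 2 * ‖x‖ ^ 2) + b * -(ε / 2 * ‖y‖ ^ 2)) := by
    linarith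
  show J w - ((ε / 2 * ‖w‖ ^ 2 : ℝ) : EReal) ≤ _
  calc J w - ((ε / 2 * ‖w‖ ^ 2 : ℝ) : EReal)
      = J w + ((-(ε / 2 * ‖w‖ ^ 2) : ℝ) : EReal) := by
        rw [sub_eq_add_neg, ← EReal.coe_neg]
    _ = (J w + ((a * b * (ε/2) * ‖x - y‖^2 : ℝ) : EReal))
          + ((a * -(ε / 2 * ‖x‖ ^ 2) + b * -(ε / 2 * ‖y‖ ^ 2) : ℝ) : EReal) := by
        rw [e2, EReal.coe_add, ← add_assoc]
    _ ≤ ((a:EReal) * J x + (b:EReal) * J y)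
          + ((a * -(ε / 2 * ‖x‖ ^ 2) + b * -(ε / 2 * ‖y‖ ^ 2) : ℝ) : EReal) :=
        add_le_add_left key _
    _ = ((a:EReal) * J x + ((a * -(ε / 2 * ‖x‖ ^ 2) : ℝ) : EReal))
          + ((b:EReal) * J y + ((b * -(ε / 2 * ‖y‖ ^ 2) : ℝ) : EReal)) := by
        rw [EReal.coe_add, add_add_add_comm]
    _ = (a:EReal) * (J x - ((ε / 2 * ‖x‖ ^ 2 : ℝ) : EReal))
          + (b:EReal) * (J y - ((ε / 2 * ‖y‖ ^ 2 : ℝ) : EReal)) := by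
        rw [sub_eq_add_neg, sub_eq_add_neg, ← EReal.coe_neg, ← EReal.coe_neg,
          ereal_mul_add_coe a ha (J x) (hJbot x), ereal_mul_add_coe b hb (J y) (hJbot y)]

private lemma Jgamma_lsc {W : Type*} [NormedAddCommGroup W] [InnerProductSpace ℝ W]
    (f : V → EReal) (A : V →L[ℝ] W) (d : W) (γ : ℝ) :
    LowerSemicontinuous (Jgamma γ f A d) := by
  intro x c hc
  have hsub : c - ((1 / 2 * ‖A x - d‖ ^ 2 : ℝ) : EReal) < Qenv γ f x :=
    EReal.sub_lt_of_lt_add hc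
  obtain ⟨v, hvmem, hv⟩ := lt_sSup_iff.mp hsub
  obtain ⟨α, y₀, hadm, rfl⟩ := hvmem
  rw [EReal.sub_lt_iff (Or.inl (EReal.coe_ne_bot _)) (Or.inl (EReal.coe_ne_top _)),
    ← EReal.coe_add] at hv
  set φ : V → ℝ := fun x' => α - γ / 2 * ‖x' - y₀‖ ^ 2 + 1 / 2 * ‖A x' - d‖ ^ 2 with hφdef
  have hφ : Continuous φ := by
    apply Continuous.add
    · exact continuous_const.sub (continuous_const.mul ((continuous_id.sub continuous_const).norm.pow 2))
    · exact (continuous_const.mul (((A.continuous).sub continuous_const).norm.pow 2))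
  have hφle : ∀ x' : V, ((φ x' : ℝ) : EReal) ≤ Jgamma γ f A d x' := by
    intro x'
    rw [hφdef]
    show ((_ + _ : ℝ) : EReal) ≤ _
    rw [EReal.coe_add]
    exact add_le_add_left (le_Qenv γ f α y₀ hadm x') _
  induction c with
  | bot =>
      exact Filter.Eventually.of_forall fun x' =>
        lt_of_lt_of_le (EReal.bot_lt_coe _) (hφle x')
  | coe cR =>
      have hcx : cR < φ x := EReal.coe_lt_coe_iff.mp hv
      have hev : ∀ᶠ x' in nhds x, cR < φ x' :=
        (hφ.continuousAt).eventually (eventually_gt_nhds hcx)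
      exact hev.mono fun x' h => lt_of_lt_of_le (EReal.coe_lt_coe_iff.mpr h) (hφle x')
  | top => exact absurd hv (not_lt.mpr le_top)


theorem stmt_14 {W : Type*} [NormedAddCommGroup W] [InnerProductSpace ℝ W] [CompleteSpace W]
    [TopologicalSpace.SeparableSpace W]
    (f : V → EReal) (hf0 : ∀ x, 0 ≤ f x) (hfprop : ∃ x, f x ≠ ⊤)
    (A : V →L[ℝ] W) (d : W) (γ : ℝ) (hγ : 0 < γ)
    (hA : ∃ ε : ℝ, 0 < ε ∧ ∀ x : V, (γ + ε) * ‖x‖ ^ 2 ≤ ‖A x‖ ^ 2) :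
    (∃ μ : ℝ, 0 < μ ∧
      ERealConvex (fun x : V => Jgamma γ f A d x - ((μ / 2 * ‖x‖ ^ 2 : ℝ) : EReal))) ∧
    (∃! x : V, ∀ y : V, Jgamma γ f A d x ≤ Jgamma γ f A d y) := by
  obtain ⟨ε, hε, hAq⟩ := hA
  refine ⟨⟨ε, hε, strong_convex f hf0 A d γ ε hγ hε hAq⟩, ?_⟩
  have hJ0 : ∀ z, 0 ≤ Jgamma γ f A d z := fun z => Jgamma_nonneg γ hγ f hf0 A d z
  have hJbot : ∀ z, Jgamma γ f A d z ≠ ⊥ := fun z =>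
    (lt_of_lt_of_le (by simp : (⊥:EReal) < 0) (hJ0 z)).ne'
  obtain ⟨x₀, hx₀⟩ := hfprop
  have hJx₀top : Jgamma γ f A d x₀ ≠ ⊤ := by
    have h1 : Qenv γ f x₀ ≤ f x₀ := Qenv_le γ f x₀
    exact (EReal.add_lt_top (lt_of_le_of_lt h1 hx₀.lt_top).ne (EReal.coe_ne_top _)).ne
  have hm_le : ∀ z, (⨅ z' : V, Jgamma γ f A d z') ≤ Jgamma γ f A d z := fun z => iInf_le _ z
  have hm0 : (0 : EReal) ≤ ⨅ z' : V, Jgamma γ f A d z' := le_iInf hJ0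
  have hmtop : (⨅ z' : V, Jgamma γ f A d z') ≠ ⊤ := ((hm_le x₀).trans_lt hJx₀top.lt_top).ne
  have hmbot : (⨅ z' : V, Jgamma γ f A d z') ≠ ⊥ :=
    (lt_of_lt_of_le (by simp : (⊥:EReal) < 0) hm0).ne'
  set mR : ℝ := (⨅ z' : V, Jgamma γ f A d z').toReal with hmRdef
  have hmR : (mR : EReal) = ⨅ z' : V, Jgamma γ f A d z' := EReal.coe_toReal hmtop hmbot
  -- quantitative strong convexity at the infimum
  have hquant : ∀ z z' : V, Jgamma γ f A d z ≠ ⊤ → Jgamma γ f A d z' ≠ ⊤ →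
      mR + 1/2 * (1/2) * (ε/2) * ‖z - z'‖^2
        ≤ 1/2 * (Jgamma γ f A d z).toReal + 1/2 * (Jgamma γ f A d z').toReal := by
    intro z z' hz hz'
    obtain ⟨Jz, hJz⟩ : ∃ r : ℝ, Jgamma γ f A d z = (r : EReal) :=
      ⟨_, (EReal.coe_toReal hz (hJbot z)).symm⟩
    obtain ⟨Jz', hJz'⟩ : ∃ r : ℝ, Jgamma γ f A d z' = (r : EReal) :=
      ⟨_, (EReal.coe_toReal hz' (hJbot z')).symm⟩
    have key := key_ineq f hf0 A d γ ε hγ hε hAq z z' (1/2) (1/2)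
      (by norm_num) (by norm_num) (by norm_num)
    have hchain : ((mR + 1/2 * (1/2) * (ε/2) * ‖z - z'‖^2 : ℝ) : EReal)
        ≤ ((1/2 * Jz + 1/2 * Jz' : ℝ) : EReal) := by
      rw [EReal.coe_add, hmR]
      refine le_trans (add_le_add_left (hm_le _) _) (le_trans key ?_)
      rw [hJz, hJz', EReal.coe_add, EReal.coe_mul, EReal.coe_mul]
    rw [EReal.coe_le_coe_iff] at hchain
    rw [hJz, hJz', EReal.toReal_coe, EReal.toReal_coe]
    linarith
  -- minimizing sequence
  have hex : ∀ n : ℕ, ∃ z : V, Jgamma γ f A d z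
      < (⨅ z' : V, Jgamma γ f A d z') + ((1 / (n+1) : ℝ) : EReal) := by
    intro n
    refine iInf_lt_iff.mp ?_
    rw [← hmR, ← EReal.coe_add, EReal.coe_lt_coe_iff]
    have h : (0:ℝ) < 1/(n+1) := by positivity
    linarith
  choose u hu using hex
  have huR : ∀ n : ℕ, ∃ r : ℝ, Jgamma γ f A d (u n) = (r : EReal) ∧ r < mR + 1/(n+1) := by
    intro n
    have h := hu n
    rw [← hmR, ← EReal.coe_add] at h
    have htop : Jgamma γ f A d (u n) ≠ ⊤ := (h.trans_le le_top).ne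
    refine ⟨_, (EReal.coe_toReal htop (hJbot _)).symm, ?_⟩
    rw [(EReal.coe_toReal htop (hJbot _)).symm, EReal.coe_lt_coe_iff] at h
    exact h
  have hcauchy : CauchySeq u := by
    rw [Metric.cauchySeq_iff]
    intro δ hδ
    obtain ⟨N, hN⟩ := exists_nat_gt (8 / (ε * δ^2))
    refine ⟨N, fun p hp q hq => ?_⟩
    obtain ⟨Jp, hJp, hJp2⟩ := huR p
    obtain ⟨Jq, hJq, hJq2⟩ := huR q
    have hq1 := hquant (u p) (u q) (by rw [hJp]; exact EReal.coe_ne_top _)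
      (by rw [hJq]; exact EReal.coe_ne_top _)
    rw [hJp, hJq, EReal.toReal_coe, EReal.toReal_coe] at hq1
    have hmono : ∀ n : ℕ, N ≤ n → (1/((n:ℝ)+1) : ℝ) ≤ 1/((N:ℝ)+1) := by
      intro n hn
      apply one_div_le_one_div_of_le (by positivity)
      have : (N:ℝ) ≤ n := by exact_mod_cast hn
      linarith
    have hNpos : (0:ℝ) < (N:ℝ) + 1 := by positivity
    have hNbig : 8 / (ε * δ^2) < (N:ℝ) + 1 := by linarith [hN]
    have hpos : (0:ℝ) < ε * δ^2 := by positivity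
    rw [div_lt_iff₀ hpos] at hNbig
    have hNsmall : 1/((N:ℝ)+1) < ε * δ^2 / 8 := by
      rw [div_lt_div_iff₀ hNpos (by norm_num : (0:ℝ) < 8)]
      nlinarith
    have hdd : ‖u p - u q‖^2 < δ^2 := by
      nlinarith [hq1, hJp2, hJq2, hmono p hp, hmono q hq, hNsmall, hε]
    rw [dist_eq_norm]
    nlinarith [norm_nonneg (u p - u q), hδ, hdd]
  obtain ⟨xb, hxb⟩ := cauchySeq_tendsto_of_complete hcauchy
  have hxbm : Jgamma γ f A d xb ≤ ⨅ z' : V, Jgamma γ f A d z' := by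
    by_contra hlt
    push_neg at hlt
    obtain ⟨c, hc1, hc2⟩ := exists_between hlt
    have hctop : c ≠ ⊤ := (lt_of_lt_of_le hc2 le_top).ne
    have hcbot : c ≠ ⊥ :=
      (lt_of_lt_of_le (by simp : (⊥:EReal) < 0) (hm0.trans hc1.le)).ne'
    lift c to ℝ using ⟨hctop, hcbot⟩ with cR
    have hcm : mR < cR := by rw [← hmR] at hc1; exact_mod_cast hc1
    have hlsc := Jgamma_lsc f A d γ xb _ hc2
    have hev : ∀ᶠ n in Filter.atTop, (cR : EReal) < Jgamma γ f A d (u n) :=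
      hxb.eventually hlsc
    obtain ⟨N₁, hN₁⟩ := Filter.eventually_atTop.mp hev
    obtain ⟨n₀, hn₀⟩ := exists_nat_one_div_lt (sub_pos.mpr hcm)
    set n := max N₁ n₀ with hn
    have h1 : (cR : EReal) < Jgamma γ f A d (u n) := hN₁ n (le_max_left _ _)
    obtain ⟨Jn, hJn, hJn2⟩ := huR n
    rw [hJn, EReal.coe_lt_coe_iff] at h1
    have h2 : (1/((n:ℝ)+1) : ℝ) ≤ 1/((n₀:ℝ)+1) := by
      apply one_div_le_one_div_of_le (by positivity)
      have : (n₀:ℝ) ≤ n := by exact_mod_cast le_max_right N₁ n₀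
      linarith
    linarith
  refine ⟨xb, fun y => le_trans hxbm (hm_le y), ?_⟩
  intro y hy
  have hJxb : Jgamma γ f A d xb = ((mR : ℝ) : EReal) := by
    rw [hmR]; exact le_antisymm hxbm (hm_le xb)
  have hJy : Jgamma γ f A d y = ((mR : ℝ) : EReal) := by
    rw [hmR]
    exact le_antisymm (le_trans (hy xb) (hmR ▸ hJxb.le)) (hm_le y)
  have hq := hquant y xb (by rw [hJy]; exact EReal.coe_ne_top _)
    (by rw [hJxb]; exact EReal.coe_ne_top _)
  rw [hJy, hJxb, EReal.toReal_coe] at hq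
  have hsq : ‖y - xb‖^2 ≤ 0 := by nlinarith
  have : ‖y - xb‖ = 0 := by nlinarith [sq_nonneg ‖y - xb‖, norm_nonneg (y - xb)]
  rw [norm_sub_eq_zero_iff] at this
  exact this
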